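/- arXiv:1103.0545 — 2 statements merged into one kernel-verified Lean document; each statement's English description precedes it below -/
import Mathlib

section
/- If x ∈ ℓ¹ satisfies (Gx)_n = (Gx)_{n+1} for all n (equivalently G x is constant), then x_n + x_{n+1} = 0 for all n, hence x_n = (−1)^{n+1} x_1; and since x ∈ ℓ¹ this forces x = 0. -/
/-! Since `(G x)ₙ - (G x)ₙ₊₁ = xₙ + xₙ₊₁`, constancy of `G x` makes `x` alternate with constant
modulus `|x₀|`; the terms of a summable sequence tend to `0`, so `x₀ = 0`. -/

/-- Gossez's operator: `(G x) n = (sum over k > n of x k) - (sum over k < n of x k)`. -/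
noncomputable def gossez (x : ℕ → ℝ) (n : ℕ) : ℝ :=
  (∑' k : ℕ, x (n + 1 + k)) - ∑ k ∈ Finset.range n, x k

open Filter Topology

theorem gossez_sub_gossez_succ {x : ℕ → ℝ} (hx : Summable x) (n : ℕ) :
    gossez x n - gossez x (n + 1) = x n + x (n + 1) := by
  have htail : ∑' k, x (n + 1 + k) = x (n + 1) + ∑' k, x (n + 1 + 1 + k) := by
    have hshift : Summable fun k => x (n + 1 + k) := hx.comp_injective (add_right_injective _)
    rw [hshift.tsum_eq_zero_add]
    simp only [add_zero, add_assoc, add_comm 1]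
  rw [gossez, gossez, htail, Finset.sum_range_succ]
  ring

theorem eq_neg_one_pow_mul_of_add_succ_eq_zero {R : Type*} [Ring R] {a : ℕ → R}
    (ha : ∀ n, a n + a (n + 1) = 0) (n : ℕ) : a n = (-1) ^ n * a 0 := by
  induction n with
  | zero => simp
  | succ n ih => rw [eq_neg_of_add_eq_zero_right (ha n), ih, pow_succ', neg_one_mul, neg_mul]

theorem eq_zero_of_tendsto_zero_of_norm_eq {E : Type*} [NormedAddCommGroup E] {a : ℕ → E}
    (ha : Tendsto a atTop (𝓝 0)) (hnorm : ∀ n, ‖a n‖ = ‖a 0‖) : a 0 = 0 := by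
  have hconst : Tendsto (fun _ : ℕ => ‖a 0‖) atTop (𝓝 0) := by
    simpa only [hnorm, norm_zero] using ha.norm
  exact norm_eq_zero.mp (tendsto_nhds_unique hconst tendsto_const_nhds).symm

theorem gossez_const_implies_zero (x : ℕ → ℝ) (hx : Summable fun n => |x n|)
    (h : ∀ n : ℕ, gossez x n = gossez x (n + 1)) :
    (∀ n : ℕ, x n + x (n + 1) = 0) ∧
    (∀ n : ℕ, x n = (-1) ^ n * x 0) ∧
    (∀ n : ℕ, x n = 0) := by
  have hsum : Summable x := summable_abs_iff.mp hx
  have hpair : ∀ n, x n + x (n + 1) = 0 := fun n => by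
    rw [← gossez_sub_gossez_succ hsum, h n, sub_self]
  have halt := eq_neg_one_pow_mul_of_add_succ_eq_zero hpair
  have hx0 : x 0 = 0 := eq_zero_of_tendsto_zero_of_norm_eq hsum.tendsto_atTop_zero fun n => by
    rw [halt n, norm_mul, norm_pow, norm_neg, norm_one, one_pow, one_mul]
  exact ⟨hpair, halt, fun n => by rw [halt n, hx0, mul_zero]⟩
end

section
/- Define S : c₀ × ℝ ⇉ ℓ¹ × ℝ by graph(S) = {((A(x*), t), (x*, t³)) : x* ∈ ℓ¹, t ∈ ℝ}, where A(x) = G(x) + ⟨x,e⟩·e. Then S is a monotone operator (on (c₀ × ℝ) × (ℓ¹ × ℝ) with the product duality pairing). -/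
/-- The operator `A x = G x + ⟨x, e⟩ • e`. -/
noncomputable def opA (x : ℕ → ℝ) (n : ℕ) : ℝ := gossez x n + ∑' k : ℕ, x k

open Filter Topology

theorem sub_mul_sub_nonneg_of_monotone {f : ℝ → ℝ} (hf : Monotone f) (s t : ℝ) :
    0 ≤ (s - t) * (f s - f t) := by
  rcases le_total s t with hst | hts
  · exact mul_nonneg_of_nonpos_of_nonpos (sub_nonpos.2 hst) (sub_nonpos.2 (hf hst))
  · exact mul_nonneg (sub_nonneg.2 hts) (sub_nonneg.2 (hf hts))

theorem hasSum_sub_succ_of_tendsto_zero {G : Type*} [AddCommGroup G] [TopologicalSpace G]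
    [IsTopologicalAddGroup G] [T2Space G] {f : ℕ → G}
    (hs : Summable fun n => f n - f (n + 1)) (hf : Tendsto f atTop (𝓝 0)) :
    HasSum (fun n => f n - f (n + 1)) (f 0) := by
  rw [hs.hasSum_iff_tendsto_nat]
  simp only [Finset.sum_range_sub']
  simpa using tendsto_const_nhds.sub hf

theorem gossez_sub {x y : ℕ → ℝ} (hx : Summable x) (hy : Summable y) (n : ℕ) :
    gossez (x - y) n = gossez x n - gossez y n := by
  have hshift {w : ℕ → ℝ} (hw : Summable w) : Summable fun k => w (n + 1 + k) :=
    hw.comp_injective (add_right_injective (n + 1))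
  simp only [gossez, Pi.sub_apply, Finset.sum_sub_distrib, (hshift hx).tsum_sub (hshift hy)]
  ring

theorem opA_sub {x y : ℕ → ℝ} (hx : Summable x) (hy : Summable y) (n : ℕ) :
    opA (x - y) n = opA x n - opA y n := by
  simp only [opA, gossez_sub hx hy, Pi.sub_apply, hx.tsum_sub hy]
  ring

noncomputable def tail (z : ℕ → ℝ) (n : ℕ) : ℝ := ∑' k, z (k + n)

section Tail

variable {z : ℕ → ℝ} (hz : Summable z)
include hz

theorem tail_sub_tail_succ (n : ℕ) : tail z n - tail z (n + 1) = z n := by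
  have h := hz.sum_add_tsum_nat_add n
  have h' := hz.sum_add_tsum_nat_add (n + 1)
  rw [Finset.sum_range_succ] at h'
  simp only [tail]
  linarith

theorem opA_eq_tail_succ_add_tail (n : ℕ) : opA z n = tail z (n + 1) + tail z n := by
  have h := hz.sum_add_tsum_nat_add n
  have hshift : ∑' k, z (n + 1 + k) = tail z (n + 1) := tsum_congr fun k => by rw [add_comm]
  rw [opA, gossez, hshift, ← h]
  simp only [tail]
  abel

theorem hasSum_opA_mul_self : HasSum (fun n => opA z n * z n) ((∑' n, z n) ^ 2) := by
  have hterm : ∀ n, opA z n * z n = tail z n ^ 2 - tail z (n + 1) ^ 2 := fun n => by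
    rw [opA_eq_tail_succ_add_tail hz, ← tail_sub_tail_succ hz]
    ring
  obtain ⟨C, hC⟩ := isBounded_iff_forall_norm_le.1
    (Metric.isBounded_range_of_tendsto _ (tendsto_sum_nat_add z))
  have hbound : ∀ n, |tail z n| ≤ C := fun n => hC _ ⟨n, rfl⟩
  have hsummable : Summable fun n => tail z n ^ 2 - tail z (n + 1) ^ 2 := by
    refine .of_norm_bounded ((summable_abs_iff.2 hz).mul_left (2 * C)) fun n => ?_
    rw [← hterm, opA_eq_tail_succ_add_tail hz, Real.norm_eq_abs, abs_mul]
    gcongr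
    linarith [abs_add_le (tail z (n + 1)) (tail z n), hbound n, hbound (n + 1)]
  have hlim : Tendsto (fun n => tail z n ^ 2) atTop (𝓝 0) := by
    simpa [tail] using (tendsto_sum_nat_add z).pow 2
  simp only [hterm]
  simpa [tail] using hasSum_sub_succ_of_tendsto_zero hsummable hlim

end Tail

theorem nonlinear_example_monotone
    (x y : ℕ → ℝ) (hx : Summable fun n => |x n|) (hy : Summable fun n => |y n|)
    (s t : ℝ) :
    0 ≤ (∑' n : ℕ, (opA x n - opA y n) * (x n - y n)) +
      (s - t) * (s ^ 3 - t ^ 3) := by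
  have hx' : Summable x := summable_abs_iff.1 hx
  have hy' : Summable y := summable_abs_iff.1 hy
  have hpairing : ∑' n, (opA x n - opA y n) * (x n - y n) = (∑' n, (x - y) n) ^ 2 := by
    simp only [← opA_sub hx' hy']
    exact (hasSum_opA_mul_self (hx'.sub hy')).tsum_eq
  rw [hpairing]
  exact add_nonneg (sq_nonneg _)
    (sub_mul_sub_nonneg_of_monotone (Odd.strictMono_pow (by decide : Odd 3)).monotone s t)
end
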